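/- If λ is a vanishing Carleson measure on the unit disk 𝔻, then its pull-back under the Cayley transformation T(z) = (z−i)/(z+i), the measure T*λ on the upper half-plane ℍ defined by d(T*λ) = |T'|^{-1} dλ∘T, is a vanishing Carleson measure on ℍ. -/

import Mathlib

open MeasureTheory Complex
open scoped ENNReal

/-- The inverse Cayley transformation `T⁻¹ : 𝔻 → ℍ`, where `T(z) = (z−i)/(z+i)`. -/
noncomputable def cayleyInv (w : ℂ) : ℂ := Complex.I * (1 + w) / (1 - w)

/-- `μ` is a Carleson measure on the unit disk 𝔻. -/
def CarlesonDisk (μ : Measure ℂ) : Prop :=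
  ∃ A : ℝ, 0 ≤ A ∧ ∀ ξ : ℂ, ‖ξ‖ = 1 → ∀ r : ℝ, 0 < r → r < 2 →
    μ (Metric.closedBall ξ r ∩ {z : ℂ | ‖z‖ < 1}) ≤ ENNReal.ofReal (A * r)

/-- `μ` is a vanishing Carleson measure on 𝔻. -/
def VanishingCarlesonDisk (μ : Measure ℂ) : Prop :=
  CarlesonDisk μ ∧ ∀ ε > (0:ℝ), ∃ δ > (0:ℝ), ∀ ξ : ℂ, ‖ξ‖ = 1 →
    ∀ r : ℝ, 0 < r → r < δ →
      μ (Metric.closedBall ξ r ∩ {z : ℂ | ‖z‖ < 1}) ≤ ENNReal.ofReal (ε * r)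

/-- `ν` is a Carleson measure on the upper half-plane ℍ. -/
def CarlesonHalfPlane (ν : Measure ℂ) : Prop :=
  ∃ A : ℝ, 0 ≤ A ∧ ∀ x : ℝ, ∀ r : ℝ, 0 < r →
    ν (Metric.closedBall (x : ℂ) r ∩ {z : ℂ | 0 < z.im}) ≤ ENNReal.ofReal (A * r)

/-- `ν` is a vanishing Carleson measure on ℍ. -/
def VanishingCarlesonHalfPlane (ν : Measure ℂ) : Prop :=
  CarlesonHalfPlane ν ∧ ∀ ε > (0:ℝ), ∃ δ > (0:ℝ), ∀ x : ℝ, ∀ r : ℝ, 0 < r → r < δ →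
    ν (Metric.closedBall (x : ℂ) r ∩ {z : ℂ | 0 < z.im}) ≤ ENNReal.ofReal (ε * r)

/-- The pull-back `T*λ` on ℍ of a measure `λ` on 𝔻 under the Cayley transformation
`T(z) = (z−i)/(z+i)`, satisfying `d(T*λ) = |T'|⁻¹ dλ∘T`; here
`|T'(T⁻¹ w)|⁻¹ = |T⁻¹(w) + i|²/2`. -/
noncomputable def cayleyPullback (μ : Measure ℂ) : Measure ℂ :=
  Measure.map cayleyInv
    (μ.withDensity fun w => ENNReal.ofReal (‖cayleyInv w + Complex.I‖ ^ 2 / 2))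

/-! ### Auxiliary lemmas -/

lemma cayley_ne_one {w : ℂ} (hw : ‖w‖ < 1) : w ≠ 1 := by
  intro h; rw [h] at hw; simp at hw

lemma cayley_plusI {w : ℂ} (hw : ‖w‖ < 1) :
    cayleyInv w + Complex.I = 2 * Complex.I / (1 - w) := by
  have : (1:ℂ) - w ≠ 0 := sub_ne_zero.mpr (Ne.symm (cayley_ne_one hw))
  unfold cayleyInv; field_simp; ring

lemma cayley_absmul {w : ℂ} (hw : ‖w‖ < 1) :
    ‖1 - w‖ * ‖cayleyInv w + Complex.I‖ = 2 := by
  have h0 : (1:ℂ) - w ≠ 0 := sub_ne_zero.mpr (Ne.symm (cayley_ne_one hw))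
  have ha : ‖1 - w‖ ≠ 0 := norm_ne_zero_iff.mpr h0
  rw [cayley_plusI hw, norm_div, norm_mul, Complex.norm_two, Complex.norm_I]
  field_simp

lemma cayley_im_pos {w : ℂ} (hw : ‖w‖ < 1) : 0 < (cayleyInv w).im := by
  have h0 : (1:ℂ) - w ≠ 0 := sub_ne_zero.mpr (Ne.symm (cayley_ne_one hw))
  have hns : Complex.normSq w < 1 := by
    have := Complex.sq_norm w
    nlinarith [norm_nonneg w]
  have hns2 : 0 < Complex.normSq (1 - w) := Complex.normSq_pos.mpr h0
  unfold cayleyInv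
  rw [Complex.div_im]
  rw [div_sub_div_same]
  apply div_pos _ hns2
  simp [Complex.normSq_apply, Complex.mul_im, Complex.mul_re,
    Complex.add_re, Complex.add_im, Complex.sub_re, Complex.sub_im] at hns ⊢
  nlinarith

lemma cayley_abs_plusI_gt {w : ℂ} (hw : ‖w‖ < 1) :
    1 < ‖cayleyInv w + Complex.I‖ := by
  have him := cayley_im_pos hw
  have h := Complex.abs_im_le_norm (cayleyInv w + Complex.I)
  simp only [Complex.add_im, Complex.I_im] at h
  have : |(cayleyInv w).im + 1| = (cayleyInv w).im + 1 := abs_of_pos (by linarith)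
  rw [this] at h
  linarith

lemma xI_ne (x : ℝ) : (x:ℂ) + Complex.I ≠ 0 := by
  intro h
  have := congrArg Complex.im h
  simp at this

lemma abs_xI_ge (x : ℝ) : 1 ≤ ‖(x:ℂ) + Complex.I‖ := by
  have h := Complex.abs_im_le_norm ((x:ℂ) + Complex.I)
  simpa using h

lemma xi_abs (x : ℝ) : ‖((x:ℂ) - Complex.I)/((x:ℂ) + Complex.I)‖ = 1 := by
  rw [norm_div]
  have h1 : ‖(x:ℂ) - Complex.I‖ = ‖(x:ℂ) + Complex.I‖ := by
    rw [Complex.norm_def, Complex.norm_def]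
    congr 1
    simp [Complex.normSq_apply]
  rw [h1]
  exact div_self (norm_ne_zero_iff.mpr (xI_ne x))

lemma cayley_sub_xi {w : ℂ} (hw : ‖w‖ < 1) (x : ℝ) :
    w - ((x:ℂ) - Complex.I)/((x:ℂ) + Complex.I)
      = 2 * Complex.I * (cayleyInv w - x) / ((cayleyInv w + Complex.I) * ((x:ℂ) + Complex.I)) := by
  have h0 : (1:ℂ) - w ≠ 0 := sub_ne_zero.mpr (Ne.symm (cayley_ne_one hw))
  have hz : cayleyInv w * (1 - w) = Complex.I * (1 + w) := by
    unfold cayleyInv; field_simp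
  have hw1 : w * (cayleyInv w + Complex.I) = cayleyInv w - Complex.I := by
    linear_combination -hz
  have hzI : cayleyInv w + Complex.I ≠ 0 := by
    intro h
    have h2 : cayleyInv w = -Complex.I := by linear_combination h
    rw [h2] at hz
    have h3 : (2:ℂ) * Complex.I = 0 := by linear_combination -hz
    simp [Complex.ext_iff] at h3
  have hx : ((x:ℂ) + Complex.I) ≠ 0 := xI_ne x
  set z := cayleyInv w with hzdef
  have hwq : w = (z - Complex.I)/(z + Complex.I) := by
    rw [eq_div_iff hzI]; exact hw1
  rw [hwq]
  field_simp
  ring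

lemma measurable_cayleyInv : Measurable cayleyInv := by
  unfold cayleyInv; fun_prop

/-- The fundamental estimate for the pull-back measure. -/
lemma pullback_le (μ : Measure ℂ) (hsupp : μ {z : ℂ | ¬ ‖z‖ < 1} = 0)
    {S : Set ℂ} (hS : MeasurableSet S) {C : ℝ} (E : Set ℂ)
    (h : ∀ w : ℂ, ‖w‖ < 1 → cayleyInv w ∈ S →
        ‖cayleyInv w + Complex.I‖ ^ 2 / 2 ≤ C ∧ w ∈ E) :
    cayleyPullback μ S ≤ ENNReal.ofReal C * μ E := by
  have hD : MeasurableSet {z : ℂ | ‖z‖ < 1} :=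
    measurableSet_lt continuous_norm.measurable measurable_const
  have hP : MeasurableSet (cayleyInv ⁻¹' S) := measurable_cayleyInv hS
  rw [cayleyPullback, Measure.map_apply measurable_cayleyInv hS, withDensity_apply _ hP]
  set D := {z : ℂ | ‖z‖ < 1} with hDdef
  set P := cayleyInv ⁻¹' S with hPdef
  set f : ℂ → ℝ≥0∞ := fun w => ENNReal.ofReal ((‖cayleyInv w + Complex.I‖) ^ 2 / 2)
    with hfdef
  have hsplit : P = (P ∩ D) ∪ (P ∩ Dᶜ) := (Set.inter_union_compl _ _).symm
  have hcompl : μ (P ∩ Dᶜ) = 0 := measure_mono_null (fun w hw => hw.2) hsupp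
  calc ∫⁻ w in P, f w ∂μ = ∫⁻ w in (P ∩ D) ∪ (P ∩ Dᶜ), f w ∂μ := by rw [← hsplit]
    _ ≤ ∫⁻ w in P ∩ D, f w ∂μ + ∫⁻ w in P ∩ Dᶜ, f w ∂μ := lintegral_union_le _ _ _
    _ = ∫⁻ w in P ∩ D, f w ∂μ := by
        rw [setLIntegral_measure_zero _ _ hcompl, add_zero]
    _ ≤ ∫⁻ _ in P ∩ D, ENNReal.ofReal C ∂μ := by
        apply setLIntegral_mono measurable_const
        rintro w ⟨hw1, hw2⟩
        exact ENNReal.ofReal_le_ofReal (h w hw2 hw1).1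
    _ = ENNReal.ofReal C * μ (P ∩ D) := by rw [setLIntegral_const]
    _ ≤ ENNReal.ofReal C * μ E := by
        gcongr
        rintro w ⟨hw1, hw2⟩
        exact (h w hw2 hw1).2

/-- A Carleson measure on the disk is finite, with total mass at most `2 A`. -/
lemma muD (μ : Measure ℂ) (A : ℝ) (hA : 0 ≤ A)
    (hc : ∀ ξ : ℂ, ‖ξ‖ = 1 → ∀ r : ℝ, 0 < r → r < 2 →
      μ (Metric.closedBall ξ r ∩ {z : ℂ | ‖z‖ < 1}) ≤ ENNReal.ofReal (A * r)) :
    μ {z : ℂ | ‖z‖ < 1} ≤ ENNReal.ofReal (2 * A) := by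
  set F : ℕ → Set ℂ := fun n => Metric.closedBall 1 (2 - 1/(n+1)) ∩ {z : ℂ | ‖z‖ < 1}
    with hF
  have hsub : {z : ℂ | ‖z‖ < 1} ⊆ ⋃ n, F n := by
    intro z hz
    have h2 : ‖z - 1‖ < 2 := by
      have h1 := norm_sub_le z (1:ℂ)
      simp only [norm_one] at h1
      simp only [Set.mem_setOf_eq] at hz
      linarith
    obtain ⟨n, hn⟩ := exists_nat_one_div_lt (show (0:ℝ) < 2 - ‖z - 1‖ by linarith)
    refine Set.mem_iUnion.mpr ⟨n, ?_, hz⟩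
    rw [Metric.mem_closedBall, dist_eq_norm]
    have : ‖z - 1‖ = ‖z - 1‖ := rfl
    rw [this]; linarith
  have hmono : Monotone F := by
    intro m n hmn
    apply Set.inter_subset_inter_left
    apply Metric.closedBall_subset_closedBall
    have : (1:ℝ)/(n+1) ≤ 1/(m+1) := by
      apply one_div_le_one_div_of_le (by positivity)
      have := (Nat.cast_le (α := ℝ)).mpr hmn
      linarith
    linarith
  calc μ {z : ℂ | ‖z‖ < 1} ≤ μ (⋃ n, F n) := measure_mono hsub
    _ = ⨆ n, μ (F n) := hmono.directed_le.measure_iUnion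
    _ ≤ ENNReal.ofReal (2 * A) := by
        apply iSup_le
        intro n
        have hr : (0:ℝ) < 2 - 1/(n+1) := by
          have : (1:ℝ)/(n+1) ≤ 1 := by
            rw [div_le_one (by positivity)]
            linarith [n.cast_nonneg (α := ℝ)]
          linarith
        calc μ (F n) ≤ ENNReal.ofReal (A * (2 - 1/(n+1))) := by
              apply hc 1 (by simp) _ hr
              have : (0:ℝ) < 1/(n+1) := by positivity
              linarith
          _ ≤ ENNReal.ofReal (2 * A) := by
              apply ENNReal.ofReal_le_ofReal
              have : (0:ℝ) < 1/(n+1) := by positivity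
              nlinarith

/-- The truncated upper half-plane region at dyadic scale `2^K`. -/
def setK (K : ℕ) : Set ℂ :=
  {z : ℂ | 0 < z.im ∧ ‖z + Complex.I‖ ≤ 2^K}

lemma measurable_absI : Measurable fun z : ℂ => ‖z + Complex.I‖ :=
  continuous_norm.measurable.comp (measurable_id.add_const _)

lemma measurableSet_setK (K : ℕ) : MeasurableSet (setK K) := by
  rw [setK, Set.setOf_and]
  exact (measurableSet_lt measurable_const Complex.measurable_im).inter
    (measurableSet_le measurable_absI measurable_const)

lemma exists_pow_between (t : ℝ) (ht : 1 ≤ t) : ∃ K : ℕ, t ≤ 2^K ∧ (2:ℝ)^K ≤ 2*t := by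
  set u := Real.logb 2 t with hu
  have hu0 : 0 ≤ u := Real.logb_nonneg one_lt_two ht
  have ht0 : (0:ℝ) < t := by linarith
  have hrt : (2:ℝ) ^ u = t := Real.rpow_logb two_pos (by norm_num) ht0
  refine ⟨⌊u⌋₊ + 1, ?_, ?_⟩
  · have h1 : u ≤ (⌊u⌋₊ + 1 : ℕ) := by
      push_cast
      exact (Nat.lt_floor_add_one u).le
    calc t = (2:ℝ) ^ u := hrt.symm
      _ ≤ (2:ℝ) ^ ((⌊u⌋₊ + 1 : ℕ) : ℝ) := by
          apply Real.rpow_le_rpow_of_exponent_le one_le_two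
          exact_mod_cast h1
      _ = 2 ^ (⌊u⌋₊ + 1) := by rw [Real.rpow_natCast]
  · have h2 : ((⌊u⌋₊ + 1 : ℕ) : ℝ) ≤ u + 1 := by
      push_cast
      linarith [Nat.floor_le hu0]
    calc (2:ℝ) ^ (⌊u⌋₊ + 1) = (2:ℝ) ^ (((⌊u⌋₊ + 1 : ℕ)) : ℝ) := (Real.rpow_natCast _ _).symm
      _ ≤ (2:ℝ) ^ (u + 1) := Real.rpow_le_rpow_of_exponent_le one_le_two h2
      _ = 2 * t := by rw [Real.rpow_add two_pos, hrt, Real.rpow_one]; ring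

/-- Dyadic induction: the pull-back measure of the truncated region grows at most linearly
in the dyadic scale. -/
lemma keyB_aux (μ : Measure ℂ) (hsupp : μ {z : ℂ | ¬ ‖z‖ < 1} = 0) (A : ℝ) (hA : 0 ≤ A)
    (hc : ∀ ξ : ℂ, ‖ξ‖ = 1 → ∀ r : ℝ, 0 < r → r < 2 →
      μ (Metric.closedBall ξ r ∩ {z : ℂ | ‖z‖ < 1}) ≤ ENNReal.ofReal (A * r)) :
    ∀ K : ℕ, cayleyPullback μ (setK K) ≤ ENNReal.ofReal (8 * A * 2^K) := by
  intro K
  induction K with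
  | zero =>
    have h0 : cayleyPullback μ (setK 0) ≤ ENNReal.ofReal 0 * μ (∅ : Set ℂ) := by
      apply pullback_le μ hsupp (measurableSet_setK 0)
      intro w hw hz
      exfalso
      have h1 := cayley_abs_plusI_gt hw
      have h2 := hz.2
      norm_num at h2
      linarith
    simp at h0
    simp [h0]
  | succ K ih =>
    -- the new dyadic ring
    set R : Set ℂ := {z : ℂ | 0 < z.im ∧ (2:ℝ)^K < ‖z + Complex.I‖ ∧
      ‖z + Complex.I‖ ≤ 2^(K+1)} with hR
    have hRmeas : MeasurableSet R := by
      rw [hR, Set.setOf_and]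
      exact (measurableSet_lt measurable_const Complex.measurable_im).inter
        (by rw [Set.setOf_and]
            exact (measurableSet_lt measurable_const measurable_absI).inter
              (measurableSet_le measurable_absI measurable_const))
    have hsub : setK (K+1) ⊆ setK K ∪ R := by
      intro z hz
      rcases le_or_gt (‖z + Complex.I‖) (2^K) with h | h
      · exact Or.inl ⟨hz.1, h⟩
      · exact Or.inr ⟨hz.1, h, hz.2⟩
    have hpow : ((2:ℝ)^(K+1))^2 / 2 = 2 * 4^K := by
      have h4 : (4:ℝ)^K = 2^K * 2^K := by
        rw [show (4:ℝ) = 2*2 by norm_num, mul_pow]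
      rw [pow_succ, h4]; ring
    have hring : cayleyPullback μ R ≤ ENNReal.ofReal (4 * A * 2^K) := by
      rcases Nat.eq_zero_or_pos K with h0 | hKpos
      · subst h0
        have hb : cayleyPullback μ R ≤ ENNReal.ofReal 2 * μ {z : ℂ | ‖z‖ < 1} := by
          apply pullback_le μ hsupp hRmeas
          intro w hw hz
          refine ⟨?_, hw⟩
          have h2 := hz.2.2
          norm_num at h2
          nlinarith [norm_nonneg (cayleyInv w + Complex.I)]
        calc cayleyPullback μ R ≤ ENNReal.ofReal 2 * μ {z : ℂ | ‖z‖ < 1} := hb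
          _ ≤ ENNReal.ofReal 2 * ENNReal.ofReal (2 * A) := by
              gcongr
              exact muD μ A hA hc
          _ = ENNReal.ofReal (4 * A * 2^0) := by
              rw [← ENNReal.ofReal_mul (by norm_num)]
              congr 1
              ring
      · have hKp : (1:ℝ) < 2^K := one_lt_pow₀ one_lt_two (by omega)
        have hb : cayleyPullback μ R ≤ ENNReal.ofReal (2 * 4^K) *
            μ (Metric.closedBall 1 (2 / 2^K) ∩ {z : ℂ | ‖z‖ < 1}) := by
          apply pullback_le μ hsupp hRmeas
          intro w hw hz
          constructor
          · have h2 := hz.2.2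
            have hnn := norm_nonneg (cayleyInv w + Complex.I)
            nlinarith [hpow]
          · refine ⟨?_, hw⟩
            rw [Metric.mem_closedBall, Complex.dist_eq]
            have habs : ‖w - 1‖ = ‖1 - w‖ := norm_sub_rev w 1
            rw [habs]
            have hmul := cayley_absmul hw
            have h1 := hz.2.1
            have hpos : (0:ℝ) < 2^K := by positivity
            rw [le_div_iff₀ hpos]
            have hnn : 0 ≤ ‖1 - w‖ := norm_nonneg _
            nlinarith
        have hμE : μ (Metric.closedBall 1 (2 / 2^K) ∩ {z : ℂ | ‖z‖ < 1}) ≤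
            ENNReal.ofReal (A * (2 / 2^K)) := by
          apply hc 1 (by simp) _ (by positivity)
          rw [div_lt_iff₀ (by positivity)]
          nlinarith
        calc cayleyPullback μ R ≤ ENNReal.ofReal (2 * 4^K) * ENNReal.ofReal (A * (2 / 2^K)) := by
              exact le_trans hb (by gcongr)
          _ = ENNReal.ofReal (4 * A * 2^K) := by
              rw [← ENNReal.ofReal_mul (by positivity)]
              congr 1
              have h4 : (4:ℝ)^K = 2^K * 2^K := by
                rw [show (4:ℝ) = 2*2 by norm_num, mul_pow]
              have hpos : (0:ℝ) < 2^K := by positivity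
              field_simp [h4]
              rw [h4]; ring
    calc cayleyPullback μ (setK (K+1)) ≤ cayleyPullback μ (setK K ∪ R) := measure_mono hsub
      _ ≤ cayleyPullback μ (setK K) + cayleyPullback μ R := measure_union_le _ _
      _ ≤ ENNReal.ofReal (8 * A * 2^K) + ENNReal.ofReal (4 * A * 2^K) := add_le_add ih hring
      _ ≤ ENNReal.ofReal (8 * A * 2^(K+1)) := by
          rw [← ENNReal.ofReal_add (by positivity) (by positivity)]
          apply ENNReal.ofReal_le_ofReal
          have hpos : (0:ℝ) < 2^K := by positivity
          rw [pow_succ]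
          nlinarith

/-- Estimate for large radii `r ≥ |x+i|/2`. -/
lemma keyB (μ : Measure ℂ) (hsupp : μ {z : ℂ | ¬ ‖z‖ < 1} = 0) (A : ℝ) (hA : 0 ≤ A)
    (hc : ∀ ξ : ℂ, ‖ξ‖ = 1 → ∀ r : ℝ, 0 < r → r < 2 →
      μ (Metric.closedBall ξ r ∩ {z : ℂ | ‖z‖ < 1}) ≤ ENNReal.ofReal (A * r))
    (x r : ℝ) (hr : 0 < r) (hbr : ‖(x:ℂ) + Complex.I‖ ≤ 2*r) :
    cayleyPullback μ (Metric.closedBall (x:ℂ) r ∩ {z : ℂ | 0 < z.im}) ≤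
      ENNReal.ofReal (48 * A * r) := by
  have hb : 1 ≤ ‖(x:ℂ) + Complex.I‖ := abs_xI_ge x
  have hr2 : (1:ℝ)/2 ≤ r := by linarith
  obtain ⟨K, hK1, hK2⟩ := exists_pow_between (3*r) (by linarith)
  have hsub : Metric.closedBall (x:ℂ) r ∩ {z : ℂ | 0 < z.im} ⊆ setK K := by
    rintro z ⟨hz1, hz2⟩
    refine ⟨hz2, ?_⟩
    rw [Metric.mem_closedBall, Complex.dist_eq] at hz1
    have ht : ‖z + Complex.I‖ ≤ ‖z - x‖ + ‖(x:ℂ) + Complex.I‖ := by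
      have := norm_add_le (z - (x:ℂ)) ((x:ℂ) + Complex.I)
      rw [show z - (x:ℂ) + ((x:ℂ) + Complex.I) = z + Complex.I by ring] at this
      exact this
    linarith
  calc cayleyPullback μ (Metric.closedBall (x:ℂ) r ∩ {z : ℂ | 0 < z.im})
      ≤ cayleyPullback μ (setK K) := measure_mono hsub
    _ ≤ ENNReal.ofReal (8 * A * 2^K) := keyB_aux μ hsupp A hA hc K
    _ ≤ ENNReal.ofReal (48 * A * r) := by
        apply ENNReal.ofReal_le_ofReal
        nlinarith

/-- Estimate for small radii `r < |x+i|/2`. -/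
lemma keyA (μ : Measure ℂ) (hsupp : μ {z : ℂ | ¬ ‖z‖ < 1} = 0)
    (x r : ℝ) (hr : 0 < r) (hrb : r < ‖(x:ℂ) + Complex.I‖ / 2) :
    cayleyPullback μ (Metric.closedBall (x:ℂ) r ∩ {z : ℂ | 0 < z.im}) ≤
      ENNReal.ofReal (9/8 * ‖(x:ℂ) + Complex.I‖^2) *
        μ (Metric.closedBall (((x:ℂ) - Complex.I)/((x:ℂ) + Complex.I))
            (4*r/‖(x:ℂ) + Complex.I‖^2) ∩ {z : ℂ | ‖z‖ < 1}) := by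
  have hb : 1 ≤ ‖(x:ℂ) + Complex.I‖ := abs_xI_ge x
  set b := ‖(x:ℂ) + Complex.I‖ with hbdef
  apply pullback_le μ hsupp
    (measurableSet_closedBall.inter (measurableSet_lt measurable_const Complex.measurable_im))
  rintro w hw ⟨hz1, hz2⟩
  set z := cayleyInv w with hzdef
  rw [Metric.mem_closedBall, Complex.dist_eq] at hz1
  have ht1 : ‖z + Complex.I‖ ≤ b + r := by
    have := norm_add_le (z - (x:ℂ)) ((x:ℂ) + Complex.I)
    rw [show z - (x:ℂ) + ((x:ℂ) + Complex.I) = z + Complex.I by ring] at this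
    linarith
  have ht2 : b - r ≤ ‖z + Complex.I‖ := by
    have h := norm_add_le (z + Complex.I) ((x:ℂ) - z)
    rw [show z + Complex.I + ((x:ℂ) - z) = (x:ℂ) + Complex.I by ring] at h
    have h2 : ‖(x:ℂ) - z‖ = ‖z - (x:ℂ)‖ := norm_sub_rev _ _
    rw [h2] at h
    linarith
  constructor
  · nlinarith [norm_nonneg (z + Complex.I)]
  · refine ⟨?_, hw⟩
    rw [Metric.mem_closedBall, Complex.dist_eq, cayley_sub_xi hw x]
    rw [norm_div, norm_mul, norm_mul, norm_mul, Complex.norm_two, Complex.norm_I, ← hbdef, ← hzdef]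
    have hzpos : (0:ℝ) < ‖z + Complex.I‖ := by nlinarith
    rw [div_le_div_iff₀ (by positivity) (by positivity)]
    have hnn : 0 ≤ ‖z - (x:ℂ)‖ := norm_nonneg _
    nlinarith [mul_nonneg (by linarith : (0:ℝ) ≤ r - ‖z - (x:ℂ)‖)
        (by positivity : (0:ℝ) ≤ b^2),
      mul_nonneg (by linarith : (0:ℝ) ≤ ‖z + Complex.I‖ - b/2)
        (by positivity : (0:ℝ) ≤ 4*r*b)]

/-- if `λ` is a vanishing Carleson measure on 𝔻, then its pull-back
`T*λ` under the Cayley transformation is a vanishing Carleson measure on ℍ. -/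
theorem stmt16 (μ : Measure ℂ) (hsupp : μ {z : ℂ | ¬ ‖z‖ < 1} = 0)
    (hμ : VanishingCarlesonDisk μ) :
    VanishingCarlesonHalfPlane (cayleyPullback μ) := by
  obtain ⟨⟨A, hA, hc⟩, hvan⟩ := hμ
  constructor
  · -- Carleson property
    refine ⟨48*A, by positivity, fun x r hr => ?_⟩
    have hb : 1 ≤ ‖(x:ℂ) + Complex.I‖ := abs_xI_ge x
    set b := ‖(x:ℂ) + Complex.I‖ with hbdef
    rcases lt_or_ge r (b/2) with hcase | hcase
    · have h1 := keyA μ hsupp x r hr hcase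
      have hscale : 4*r/b^2 < 2 := by
        rw [div_lt_iff₀ (by positivity)]
        nlinarith
      have h2 := hc (((x:ℂ) - Complex.I)/((x:ℂ) + Complex.I)) (xi_abs x) (4*r/b^2)
        (by positivity) hscale
      have heq : 9/8 * b^2 * (A * (4*r/b^2)) = 9/2 * (A*r) := by
        field_simp
        ring
      calc cayleyPullback μ (Metric.closedBall (x:ℂ) r ∩ {z : ℂ | 0 < z.im})
          ≤ ENNReal.ofReal (9/8 * b^2) * ENNReal.ofReal (A * (4*r/b^2)) :=
            le_trans h1 (by gcongr)
        _ = ENNReal.ofReal (9/8 * b^2 * (A * (4*r/b^2))) :=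
            (ENNReal.ofReal_mul (by positivity)).symm
        _ ≤ ENNReal.ofReal (48*A*r) := by
            apply ENNReal.ofReal_le_ofReal
            rw [heq]
            nlinarith
    · exact keyB μ hsupp A hA hc x r hr (by rw [← hbdef]; linarith)
  · -- vanishing property
    intro ε hε
    obtain ⟨δ₀, hδ₀pos, hδ₀⟩ := hvan (2*ε/9) (by positivity)
    refine ⟨min (δ₀/4) (1/2), by positivity, fun x r hr hrδ => ?_⟩
    have hb : 1 ≤ ‖(x:ℂ) + Complex.I‖ := abs_xI_ge x
    set b := ‖(x:ℂ) + Complex.I‖ with hbdef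
    have hr2 : r < 1/2 := lt_of_lt_of_le hrδ (min_le_right _ _)
    have hcase : r < b/2 := by linarith
    have h1 := keyA μ hsupp x r hr hcase
    have hscale : 4*r/b^2 < δ₀ := by
      have hle : 4*r/b^2 ≤ 4*r := by
        rw [div_le_iff₀ (by positivity)]
        nlinarith [mul_nonneg hr.le (by nlinarith : (0:ℝ) ≤ b^2 - 1)]
      have := lt_of_lt_of_le hrδ (min_le_left _ _)
      linarith
    have h2 := hδ₀ (((x:ℂ) - Complex.I)/((x:ℂ) + Complex.I)) (xi_abs x) (4*r/b^2)
      (by positivity) hscale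
    have heq : 9/8 * b^2 * (2*ε/9 * (4*r/b^2)) = ε * r := by
      field_simp
      ring
    calc cayleyPullback μ (Metric.closedBall (x:ℂ) r ∩ {z : ℂ | 0 < z.im})
        ≤ ENNReal.ofReal (9/8 * b^2) * ENNReal.ofReal (2*ε/9 * (4*r/b^2)) :=
          le_trans h1 (by gcongr)
      _ = ENNReal.ofReal (9/8 * b^2 * (2*ε/9 * (4*r/b^2))) :=
          (ENNReal.ofReal_mul (by positivity)).symm
      _ = ENNReal.ofReal (ε * r) := by rw [heq]
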